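/- arXiv:2102.02472 — 2 statements merged into one kernel-verified Lean document; each statement's English description precedes it below -/
import Mathlib

section
/- For every number of arms K ≥ 2, dimension D ≥ 1, Lipschitz constant L > 0, and every mean-reward vector μ ∈ Φ(L) having at least one suboptimal arm and with μ* < 1, the optimal value C(μ, L) of the lower-bound linear program satisfies C(μ, L) ≤ (8 / Δ_μ²) · min{ K, (8·L·√D / Δ_μ + 1)^D }, where Δ_μ := min_{i ∉ 𝒦*(μ)} (μ* − μ(i)) is the smallest suboptimality gap. -/
open Real Finset MeasureTheory

noncomputable section

/-- Bernoulli Kullback–Leibler divergence between means `p` and `q`. -/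
def klBer (p q : ℝ) : ℝ :=
  p * Real.log (p / q) + (1 - p) * Real.log ((1 - p) / (1 - q))

/-- Best mean reward `μ* = max_i μ(i)`. -/
def muStar {K : ℕ} (μ : Fin K → ℝ) : ℝ := ⨆ i, μ i

/-- The Lipschitz structure `Φ(L)` for embedding `x`. -/
def Phi {K D : ℕ} (x : Fin K → EuclideanSpace ℝ (Fin D)) (L : ℝ) : Set (Fin K → ℝ) :=
  {μ | (∀ i, μ i ∈ Set.Icc (0:ℝ) 1) ∧ ∀ i j, |μ i - μ j| ≤ L * dist (x i) (x j)}

/-- The confusing parameter `ν^j(i; μ, L) = max{μ(i), μ* − L·d(i,j)}`. -/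
def nuConf {K D : ℕ} (x : Fin K → EuclideanSpace ℝ (Fin D)) (μ : Fin K → ℝ) (L : ℝ)
    (j i : Fin K) : ℝ :=
  max (μ i) (muStar μ - L * dist (x i) (x j))

/-- Feasibility for the lower-bound linear program. -/
def LPFeasible {K D : ℕ} (x : Fin K → EuclideanSpace ℝ (Fin D)) (μ : Fin K → ℝ) (L : ℝ)
    (η : Fin K → ℝ) : Prop :=
  (∀ i, 0 ≤ η i) ∧
  ∀ j, μ j ≠ muStar μ →
    1 ≤ ∑ i ∈ Finset.univ.filter (fun i => μ i ≠ muStar μ),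
          klBer (μ i) (nuConf x μ L j i) * η i

/-- Objective of the lower-bound linear program. -/
def LPObj {K : ℕ} (μ : Fin K → ℝ) (η : Fin K → ℝ) : ℝ :=
  ∑ i ∈ Finset.univ.filter (fun i => μ i ≠ muStar μ), (muStar μ - μ i) * η i

/-- `C(μ, L)`: the optimal value (infimum) of the lower-bound linear program. -/
def Cval {K D : ℕ} (x : Fin K → EuclideanSpace ℝ (Fin D)) (μ : Fin K → ℝ) (L : ℝ) : ℝ :=
  sInf {v : ℝ | ∃ η : Fin K → ℝ, LPFeasible x μ L η ∧ v = LPObj μ η}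

end

/-!
By Pinsker's inequality `KL(p‖q) ≥ 2 (q - p)²` it suffices to exhibit a cheap feasible `η`.
Cut `[0,1]^D` into cubes of side `s = Δ / (8 L √D)`; there are at most `(8 L √D / Δ + 1)^D` of
them. Put weight `8 / Δ²` on one suboptimal arm in each cube containing a suboptimal arm. Every
suboptimal `j` shares a cube with such an arm `i`, so `L d(i,j) ≤ Δ / 8`, whence
`ν^j(i) = μ* - L d(i,j) ≥ μ(i) + Δ / 2` and `KL(μ(i) ‖ ν^j(i)) ≥ Δ² / 2`: the constraint for `j`
holds. All gaps are at most `1`, so the cost is at most `8 / Δ²` times the number of chosen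
arms, which is at most `min K (8 L √D / Δ + 1)^D`.
-/

open Set

theorem mul_log_div_eq {p q : ℝ} (hq : q ≠ 0) : p * log (p / q) = p * log p - p * log q := by
  rcases eq_or_ne p 0 with rfl | hp
  · simp
  · rw [log_div hp hq, mul_sub]

theorem two_mul_sq_sub_le_klBer {p q : ℝ} (hp : 0 ≤ p) (hpq : p ≤ q) (hq : q < 1) :
    2 * (q - p) ^ 2 ≤ klBer p q := by
  rcases eq_or_ne q 0 with rfl | hq0
  · obtain rfl : p = 0 := le_antisymm hpq hp
    simp [klBer]
  set f : ℝ → ℝ := fun t => -(p * log t) - (1 - p) * log (1 - t) - 2 * (t - p) ^ 2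
  set f' : ℝ → ℝ := fun t => -(p / t) + (1 - p) / (1 - t) - 4 * (t - p)
  have hcont : ContinuousOn f (Icc p q) := by
    have hlog : ContinuousOn (fun t => p * log t) (Icc p q) := by
      rcases hp.eq_or_lt with rfl | hp0
      · simp only [zero_mul]; exact continuousOn_const
      · exact continuousOn_const.mul
          (continuousOn_log.mono fun t ht => (hp0.trans_le ht.1).ne')
    have hlog' : ContinuousOn (fun t => log (1 - t)) (Icc p q) :=
      continuousOn_log.comp (by fun_prop) fun t ht => sub_ne_zero.2 (ht.2.trans_lt hq).ne'
    exact (hlog.neg.sub (continuousOn_const.mul hlog')).sub (by fun_prop)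
  have hderiv : ∀ t ∈ Ioo p q, HasDerivAt f (f' t) t := by
    intro t ht
    have ht0 : t ≠ 0 := (hp.trans_lt ht.1).ne'
    have ht1 : 1 - t ≠ 0 := sub_ne_zero.2 (ht.2.trans hq).ne'
    have := ((((hasDerivAt_log ht0).const_mul p).neg).sub
      ((((hasDerivAt_id t).const_sub 1).log ht1).const_mul (1 - p))).sub
      ((((hasDerivAt_id t).sub_const p).pow 2).const_mul 2)
    refine this.congr_deriv ?_
    simp only [f', id]; field_simp; ring
  have hderiv_nonneg : ∀ t ∈ Ioo p q, 0 ≤ f' t := by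
    intro t ht
    have ht0 : 0 < t := hp.trans_lt ht.1
    have ht1 : 0 < 1 - t := sub_pos.2 (ht.2.trans hq)
    have : f' t = (t - p) * (1 - 2 * t) ^ 2 / (t * (1 - t)) := by
      simp only [f']; field_simp; ring
    rw [this]
    have := sub_nonneg.2 ht.1.le
    positivity
  have hmono : MonotoneOn f (Icc p q) := by
    refine monotoneOn_of_hasDerivWithinAt_nonneg (f' := f') (convex_Icc p q) hcont
      (fun t ht => ?_) (fun t ht => ?_)
    · rw [interior_Icc] at ht ⊢; exact (hderiv t ht).hasDerivWithinAt
    · rw [interior_Icc] at ht; exact hderiv_nonneg t ht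
  have hfpq := hmono (left_mem_Icc.2 hpq) (right_mem_Icc.2 hpq) hpq
  rw [klBer, mul_log_div_eq hq0, mul_log_div_eq (sub_ne_zero.2 hq.ne')]
  simp only [f, sub_self] at hfpq
  linarith

theorem klBer_nonneg {p q : ℝ} (hp : 0 ≤ p) (hpq : p ≤ q) (hq : q < 1) : 0 ≤ klBer p q :=
  (mul_nonneg zero_le_two (sq_nonneg _)).trans (two_mul_sq_sub_le_klBer hp hpq hq)

theorem abs_sub_le_of_floor_div_eq {a b s : ℝ} (hs : 0 < s) (h : ⌊a / s⌋ = ⌊b / s⌋) :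
    |a - b| ≤ s := by
  have ha := Int.floor_le (a / s)
  have ha' := Int.lt_floor_add_one (a / s)
  have hb := Int.floor_le (b / s)
  have hb' := Int.lt_floor_add_one (b / s)
  rw [h] at ha ha'
  have : |a / s - b / s| ≤ 1 := abs_le.2 ⟨by linarith, by linarith⟩
  rwa [← sub_div, abs_div, abs_of_pos hs, div_le_one hs] at this

section Grid

variable {D : ℕ}

noncomputable def gridCell (s : ℝ) (y : EuclideanSpace ℝ (Fin D)) : Fin D → ℤ := fun t => ⌊y t / s⌋

theorem dist_le_of_gridCell_eq {s : ℝ} (hs : 0 < s) {y z : EuclideanSpace ℝ (Fin D)}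
    (h : gridCell s y = gridCell s z) : dist y z ≤ √D * s := by
  have hcoord : ∀ t, dist (y t) (z t) ^ 2 ≤ s ^ 2 := fun t => by
    rw [Real.dist_eq, sq_abs]
    exact sq_le_sq' (abs_le.1 (abs_sub_le_of_floor_div_eq hs (congrFun h t))).1
      (abs_le.1 (abs_sub_le_of_floor_div_eq hs (congrFun h t))).2
  calc dist y z = √(∑ t, dist (y t) (z t) ^ 2) := EuclideanSpace.dist_eq y z
    _ ≤ √(∑ _t : Fin D, s ^ 2) := Real.sqrt_le_sqrt (Finset.sum_le_sum fun t _ => hcoord t)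
    _ = √D * s := by simp [Real.sqrt_mul (Nat.cast_nonneg D), Real.sqrt_sq hs.le]

theorem gridCell_mem_piFinset {s : ℝ} (hs : 0 < s) {y : EuclideanSpace ℝ (Fin D)}
    (hy : ∀ t, y t ∈ Set.Icc (0 : ℝ) 1) :
    gridCell s y ∈ Fintype.piFinset fun _ => Finset.Icc 0 ⌊1 / s⌋ :=
  Fintype.mem_piFinset.2 fun t => Finset.mem_Icc.2
    ⟨Int.floor_nonneg.2 (div_nonneg (hy t).1 hs.le),
      Int.floor_le_floor (div_le_div_of_nonneg_right (hy t).2 hs.le)⟩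

theorem exists_subset_card_le_forall_dist_le {ι : Type*} (T : Finset ι)
    (x : ι → EuclideanSpace ℝ (Fin D)) (hx : ∀ i ∈ T, ∀ t, x i t ∈ Set.Icc (0 : ℝ) 1)
    {s : ℝ} (hs : 0 < s) :
    ∃ S ⊆ T, (S.card : ℝ) ≤ (1 / s + 1) ^ D ∧ ∀ j ∈ T, ∃ i ∈ S, dist (x i) (x j) ≤ √D * s := by
  classical
  obtain ⟨S, hST, hinj, himage⟩ := Finset.exists_subset_injOn_image_eq_of_surjOn
    (f := gridCell s ∘ x) T (T.image (gridCell s ∘ x)) (by simp [Set.SurjOn])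
  refine ⟨S, by exact_mod_cast hST, ?_, fun j hj => ?_⟩
  · have hcard : S.card ≤ (⌊1 / s⌋ + 1).toNat ^ D := calc
      S.card = (T.image (gridCell s ∘ x)).card := by rw [← himage, Finset.card_image_of_injOn hinj]
      _ ≤ (Fintype.piFinset fun _ : Fin D => Finset.Icc 0 ⌊1 / s⌋).card :=
        Finset.card_le_card fun c hc => by
          obtain ⟨i, hi, rfl⟩ := Finset.mem_image.1 hc
          exact gridCell_mem_piFinset hs (hx i hi)
      _ = (⌊1 / s⌋ + 1).toNat ^ D := by simp
    have hfloor : ((⌊1 / s⌋ + 1).toNat : ℝ) ≤ 1 / s + 1 := by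
      have := Int.floor_nonneg.2 (one_div_pos.2 hs).le
      rw [← Int.cast_natCast, Int.toNat_of_nonneg (by omega)]
      push_cast
      linarith [Int.floor_le (1 / s)]
    calc (S.card : ℝ) ≤ ((⌊1 / s⌋ + 1).toNat : ℝ) ^ D := by exact_mod_cast hcard
      _ ≤ (1 / s + 1) ^ D := pow_le_pow_left₀ (Nat.cast_nonneg _) hfloor D
  · have hjS := Finset.mem_image_of_mem (gridCell s ∘ x) hj
    rw [← himage, Finset.mem_image] at hjS
    obtain ⟨i, hi, hij⟩ := hjS
    exact ⟨i, hi, dist_le_of_gridCell_eq hs hij⟩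

end Grid

section LowerBoundProgram

variable {K D : ℕ}

theorem le_muStar (μ : Fin K → ℝ) (i : Fin K) : μ i ≤ muStar μ :=
  le_ciSup (Set.finite_range μ).bddAbove i

noncomputable def minGap (μ : Fin K → ℝ) : ℝ :=
  sInf {g : ℝ | ∃ i, μ i ≠ muStar μ ∧ g = muStar μ - μ i}

theorem finite_suboptimalGaps (μ : Fin K → ℝ) :
    {g : ℝ | ∃ i, μ i ≠ muStar μ ∧ g = muStar μ - μ i}.Finite :=
  (Set.finite_range fun i => muStar μ - μ i).subset fun _ ⟨i, _, hg⟩ => ⟨i, hg.symm⟩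

theorem minGap_le_of_ne (μ : Fin K → ℝ) {i : Fin K} (hi : μ i ≠ muStar μ) :
    minGap μ ≤ muStar μ - μ i :=
  csInf_le (finite_suboptimalGaps μ).bddBelow ⟨i, hi, rfl⟩

theorem minGap_pos {μ : Fin K → ℝ} (h : ∃ i, μ i ≠ muStar μ) : 0 < minGap μ := by
  obtain ⟨i, hi⟩ := h
  refine ((finite_suboptimalGaps μ).lt_csInf_iff ⟨_, i, hi, rfl⟩).2 ?_
  rintro _ ⟨j, hj, rfl⟩
  exact sub_pos.2 ((le_muStar μ j).lt_of_ne hj)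

theorem LPObj_nonneg (μ : Fin K → ℝ) {η : Fin K → ℝ} (hη : ∀ i, 0 ≤ η i) : 0 ≤ LPObj μ η :=
  Finset.sum_nonneg fun i _ => mul_nonneg (sub_nonneg.2 (le_muStar μ i)) (hη i)

theorem Cval_le_LPObj {x : Fin K → EuclideanSpace ℝ (Fin D)} {μ : Fin K → ℝ} {L : ℝ}
    {η : Fin K → ℝ} (h : LPFeasible x μ L η) : Cval x μ L ≤ LPObj μ η :=
  csInf_le ⟨0, by rintro _ ⟨η', h', rfl⟩; exact LPObj_nonneg μ h'.1⟩ ⟨η, h, rfl⟩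

variable {x : Fin K → EuclideanSpace ℝ (Fin D)} {μ : Fin K → ℝ} {L : ℝ}

theorem nuConf_lt_one (hL : 0 ≤ L) (hμ : muStar μ < 1) (j i : Fin K) : nuConf x μ L j i < 1 :=
  max_lt ((le_muStar μ i).trans_lt hμ)
    (by linarith [mul_nonneg hL (dist_nonneg (x := x i) (y := x j))])

theorem klBer_nuConf_nonneg (hL : 0 ≤ L) (hμ : muStar μ < 1) {i : Fin K} (hμi : 0 ≤ μ i)
    (j : Fin K) : 0 ≤ klBer (μ i) (nuConf x μ L j i) :=
  klBer_nonneg hμi (le_max_left _ _) (nuConf_lt_one hL hμ j i)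

theorem two_mul_sq_le_klBer_nuConf (hL : 0 ≤ L) (hμ : muStar μ < 1) {i j : Fin K}
    (hμi : 0 ≤ μ i) (h : μ i ≤ muStar μ - L * dist (x i) (x j)) :
    2 * (muStar μ - L * dist (x i) (x j) - μ i) ^ 2 ≤ klBer (μ i) (nuConf x μ L j i) := by
  have hν : nuConf x μ L j i = muStar μ - L * dist (x i) (x j) := max_eq_right h
  rw [hν]
  exact two_mul_sq_sub_le_klBer hμi h (hν ▸ nuConf_lt_one hL hμ j i)

theorem LPFeasible_ite_of_forall_exists (hL : 0 ≤ L) (hμ : muStar μ < 1) (hμ0 : ∀ i, 0 ≤ μ i)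
    {S : Finset (Fin K)} (hS : ∀ i ∈ S, μ i ≠ muStar μ) {c : ℝ} (hc : 0 ≤ c)
    (hcover : ∀ j, μ j ≠ muStar μ → ∃ i ∈ S, 1 ≤ klBer (μ i) (nuConf x μ L j i) * c) :
    LPFeasible x μ L fun i => if i ∈ S then c else 0 := by
  have hη : ∀ i, 0 ≤ if i ∈ S then c else 0 := fun i => by split_ifs <;> simp [hc]
  refine ⟨hη, fun j hj => ?_⟩
  obtain ⟨i, hi, hone⟩ := hcover j hj
  calc 1 ≤ klBer (μ i) (nuConf x μ L j i) * (if i ∈ S then c else 0) := by rwa [if_pos hi]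
    _ ≤ _ := Finset.single_le_sum
        (f := fun i => klBer (μ i) (nuConf x μ L j i) * (if i ∈ S then c else 0))
        (fun k _ => mul_nonneg (klBer_nuConf_nonneg hL hμ (hμ0 k) j) (hη k))
        (Finset.mem_filter.2 ⟨Finset.mem_univ i, hS i hi⟩)

theorem LPFeasible_ite_of_forall_dist_le (hL : 0 ≤ L) (hμ : muStar μ < 1)
    (hμ0 : ∀ i, 0 ≤ μ i) (hsub : ∃ i, μ i ≠ muStar μ) {S : Finset (Fin K)}
    (hS : ∀ i ∈ S, μ i ≠ muStar μ)
    (hnet : ∀ j, μ j ≠ muStar μ → ∃ i ∈ S, L * dist (x i) (x j) ≤ minGap μ / 2) :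
    LPFeasible x μ L fun i => if i ∈ S then 8 / minGap μ ^ 2 else 0 := by
  have hΔ := minGap_pos hsub
  refine LPFeasible_ite_of_forall_exists hL hμ hμ0 hS (by positivity) fun j hj => ?_
  obtain ⟨i, hi, hLd⟩ := hnet j hj
  have hgap := minGap_le_of_ne μ (hS i hi)
  have hclose : μ i ≤ muStar μ - L * dist (x i) (x j) := by linarith
  have hkl := two_mul_sq_le_klBer_nuConf hL hμ (hμ0 i) hclose
  refine ⟨i, hi, ?_⟩
  calc 1 ≤ 2 * (minGap μ / 2) ^ 2 * (8 / minGap μ ^ 2) := by field_simp; norm_num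
    _ ≤ klBer (μ i) (nuConf x μ L j i) * (8 / minGap μ ^ 2) := by
      gcongr
      refine le_trans ?_ hkl
      gcongr
      linarith

theorem LPObj_ite_le (hμ : muStar μ ≤ 1) (hμ0 : ∀ i, 0 ≤ μ i) (S : Finset (Fin K)) {c : ℝ}
    (hc : 0 ≤ c) : LPObj μ (fun i => if i ∈ S then c else 0) ≤ S.card * c := by
  have hη : ∀ i, 0 ≤ if i ∈ S then c else 0 := fun i => by split_ifs <;> simp [hc]
  calc LPObj μ (fun i => if i ∈ S then c else 0)
      ≤ ∑ i ∈ Finset.univ.filter (fun i => μ i ≠ muStar μ), if i ∈ S then c else 0 :=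
        Finset.sum_le_sum fun i _ => mul_le_of_le_one_left (hη i) (by linarith [hμ0 i])
    _ ≤ ∑ i, if i ∈ S then c else 0 :=
        Finset.sum_le_sum_of_subset_of_nonneg (Finset.filter_subset _ _) fun i _ _ => hη i
    _ = S.card * c := by simp [Finset.sum_ite_mem]

end LowerBoundProgram

theorem stmt0_general {K D : ℕ} (hD : 1 ≤ D)
    (x : Fin K → EuclideanSpace ℝ (Fin D))
    (hcube : ∀ i t, x i t ∈ Set.Icc (0:ℝ) 1)
    (L : ℝ) (hL : 0 < L)
    (μ : Fin K → ℝ) (hμ : μ ∈ Phi x L)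
    (hsub : ∃ i, μ i ≠ muStar μ)
    (hlt : muStar μ < 1) :
    Cval x μ L ≤
      8 / (sInf {g : ℝ | ∃ i, μ i ≠ muStar μ ∧ g = muStar μ - μ i}) ^ 2 *
        min (K : ℝ)
          ((8 * L * Real.sqrt D / sInf {g : ℝ | ∃ i, μ i ≠ muStar μ ∧ g = muStar μ - μ i} + 1) ^ D)
    := by
  change Cval x μ L ≤ 8 / minGap μ ^ 2 * min (K : ℝ) ((8 * L * √D / minGap μ + 1) ^ D)
  set Δ := minGap μ
  have hΔ : 0 < Δ := minGap_pos hsub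
  have hsqrtD : 0 < √(D : ℝ) := Real.sqrt_pos.2 (by exact_mod_cast hD)
  have hμ0 : ∀ i, 0 ≤ μ i := fun i => (hμ.1 i).1
  obtain ⟨S, hST, hcardS, hnet⟩ := exists_subset_card_le_forall_dist_le
    (Finset.univ.filter fun i => μ i ≠ muStar μ) x (fun i _ => hcube i)
    (s := Δ / (8 * L * √D)) (by positivity)
  have hSsub : ∀ i ∈ S, μ i ≠ muStar μ := fun i hi => (Finset.mem_filter.1 (hST hi)).2
  have hfeas := LPFeasible_ite_of_forall_dist_le hL.le hlt hμ0 hsub hSsub fun j hj => by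
    obtain ⟨i, hi, hdist⟩ := hnet j (Finset.mem_filter.2 ⟨Finset.mem_univ j, hj⟩)
    refine ⟨i, hi, ?_⟩
    calc L * dist (x i) (x j) ≤ L * (√D * (Δ / (8 * L * √D))) := by gcongr
      _ ≤ Δ / 2 := by field_simp; linarith
  have hcard : (S.card : ℝ) ≤ min (K : ℝ) ((8 * L * √D / Δ + 1) ^ D) :=
    le_min (by exact_mod_cast (Finset.card_le_univ S).trans_eq (Fintype.card_fin K))
      (by rwa [one_div_div] at hcardS)
  calc Cval x μ L ≤ LPObj μ fun i => if i ∈ S then 8 / Δ ^ 2 else 0 := Cval_le_LPObj hfeas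
    _ ≤ S.card * (8 / Δ ^ 2) := LPObj_ite_le hlt.le hμ0 S (by positivity)
    _ ≤ 8 / Δ ^ 2 * min (K : ℝ) ((8 * L * √D / Δ + 1) ^ D) := by
      rw [mul_comm]; gcongr

theorem stmt0 {K D : ℕ} (hK : 2 ≤ K) (hD : 1 ≤ D)
    (x : Fin K → EuclideanSpace ℝ (Fin D))
    (hx : Function.Injective x)
    (hcube : ∀ i t, x i t ∈ Set.Icc (0:ℝ) 1)
    (L : ℝ) (hL : 0 < L)
    (μ : Fin K → ℝ) (hμ : μ ∈ Phi x L)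
    (hsub : ∃ i, μ i ≠ muStar μ)
    (hlt : muStar μ < 1) :
    Cval x μ L ≤
      8 / (sInf {g : ℝ | ∃ i, μ i ≠ muStar μ ∧ g = muStar μ - μ i}) ^ 2 *
        min (K : ℝ)
          ((8 * L * Real.sqrt D / sInf {g : ℝ | ∃ i, μ i ≠ muStar μ ∧ g = muStar μ - μ i} + 1) ^ D) :=
  stmt0_general hD x hcube L hL μ hμ hsub hlt
end

section
/- (Lemma 1, concentration of the quantile estimator.) Suppose μ_m ∈ Φ(L) for all m ∈ [M], the learnability assumption holds for some α ∈ (0,1] and ε_α > 0, and every arm is pulled at least τ times in every episode. Let β ∈ (0, α), ε_β > ε_α, and ε' := ε_β − ε_α. If τ ≥ (4 / (Δ_x² ε'²)) · ( ln(2K) + 1 / min{β, α − β} ), then Pr[ L > ℓ_β + ε_β ] + Pr[ ℓ_β > L + ε' ] ≤ 8M · exp( −(Δ_x² ε'² / 4) · min{β, α − β} · τ M ). -/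
/-!
Put `δ = Δ_x ε' / 2`. If every empirical mean of an episode is within `δ` of its true mean, the
estimated Lipschitz constant of that episode is within `2δ / Δ_x = ε'` of the true one. Hoeffding's
inequality and a union bound over the arms bound the probability that an episode deviates by
`p = 2K exp (-2τδ²)`, and distinct episodes deviate independently. If `ℓ_β` misses `L` in either
direction, then at least `N = ⌈min β (α - β) M⌉` episodes deviate: too few learnable episodes
stay above `L - ε_β`, or too many episodes go above `L + ε'`. Any fixed set of `N` episodes
all deviate with probability at most `p ^ N`, so the union over such sets gives `C(M, N) p ^ N`,
and the lower bound on `τ` turns this into the stated exponential.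
-/

open Real Finset MeasureTheory ProbabilityTheory

noncomputable section

/-- `Δ_x`: the minimal distance between two distinct embedded arms. -/
def Δemb {K D : ℕ} (x : Fin K → EuclideanSpace ℝ (Fin D)) : ℝ :=
  sInf {r : ℝ | ∃ i j : Fin K, i ≠ j ∧ r = dist (x i) (x j)}

/-- The tightest Lipschitz constant of a mean vector `a` w.r.t. embedding `x`:
`max_{i ≠ j} |a(i) − a(j)| / d(i,j)`. -/
def lipConst {K D : ℕ} (x : Fin K → EuclideanSpace ℝ (Fin D)) (a : Fin K → ℝ) : ℝ :=
  sSup {r : ℝ | ∃ i j : Fin K, i ≠ j ∧ r = |a i - a j| / dist (x i) (x j)}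

/-- The `k`-th largest value among `f 1, …, f M`. -/
def kthLargest {M : ℕ} (f : Fin M → ℝ) (k : ℕ) : ℝ :=
  sSup {t : ℝ | k ≤ (Finset.univ.filter (fun m => t ≤ f m)).card}

/-- Empirical mean of arm `i` in episode `m`, given rewards `r` indexed by
episode/arm/pull-index. -/
def empMean {M K : ℕ} {Ω : Type*} {n : Fin M → Fin K → ℕ}
    (r : (Σ m : Fin M, Σ i : Fin K, Fin (n m i)) → Ω → ℝ) (m : Fin M) (i : Fin K)
    (ω : Ω) : ℝ :=
  (∑ s : Fin (n m i), r ⟨m, i, s⟩ ω) / (n m i)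

end

section Hoeffding

variable {Ω : Type*} [MeasurableSpace Ω] {P : Measure Ω}

lemma integral_eq_of_eq_zero_or_one {X : Ω → ℝ} (hX : Measurable X)
    (h01 : ∀ ω, X ω = 0 ∨ X ω = 1) {p : ℝ} (hp : 0 ≤ p)
    (hmean : P {ω | X ω = 1} = ENNReal.ofReal p) :
    P[X] = p := by
  have hind : X = Set.indicator {ω | X ω = 1} 1 := by
    funext ω
    rcases h01 ω with h | h <;> simp [h]
  rw [hind, integral_indicator_one (s := {ω | X ω = 1}) (hX (measurableSet_singleton 1)),
    measureReal_def, hmean, ENNReal.toReal_ofReal hp]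

variable [IsProbabilityMeasure P]

lemma hasSubgaussianMGF_sub_integral_of_mem_Icc_zero_one {X : Ω → ℝ} (hX : Measurable X)
    (h01 : ∀ ω, X ω ∈ Set.Icc (0 : ℝ) 1) :
    HasSubgaussianMGF (fun ω ↦ X ω - P[X]) (1 / 4) P := by
  convert hasSubgaussianMGF_of_mem_Icc (μ := P) hX.aemeasurable (ae_of_all _ h01) using 1
  ext
  norm_num

lemma measureReal_le_abs_sum_sub_integral_le {ι : Type*} [Fintype ι] {X : ι → Ω → ℝ}
    (h_indep : iIndepFun X P) (hmeas : ∀ i, Measurable (X i))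
    (h01 : ∀ i ω, X i ω ∈ Set.Icc (0 : ℝ) 1) {ε : ℝ} (hε : 0 ≤ ε) :
    P.real {ω | ε ≤ |∑ i, (X i ω - P[X i])|} ≤ 2 * exp (-2 * ε ^ 2 / Fintype.card ι) := by
  set Y : ι → Ω → ℝ := fun i ω ↦ X i ω - P[X i]
  have hY : iIndepFun Y P :=
    h_indep.comp (fun i x ↦ x - ∫ ω, X i ω ∂P) fun _ ↦ measurable_id.sub_const _
  have hYsub : ∀ i, HasSubgaussianMGF (Y i) (1 / 4) P :=
    fun i ↦ hasSubgaussianMGF_sub_integral_of_mem_Icc_zero_one (hmeas i) (h01 i)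
  have tail : ∀ Z : ι → Ω → ℝ, iIndepFun Z P → (∀ i, HasSubgaussianMGF (Z i) (1 / 4) P) →
      P.real {ω | ε ≤ ∑ i, Z i ω} ≤ exp (-2 * ε ^ 2 / Fintype.card ι) := by
    intro Z hZ hZsub
    refine (HasSubgaussianMGF.measure_sum_ge_le_of_iIndepFun hZ (s := univ)
      (fun i _ ↦ hZsub i) hε).trans_eq ?_
    simp only [sum_const, card_univ, nsmul_eq_mul, NNReal.coe_mul, NNReal.coe_natCast]
    norm_num
    ring
  have hupper := tail Y hY hYsub
  have hlower := tail (fun i ↦ -Y i) (hY.comp (fun _ x ↦ -x) fun _ ↦ measurable_neg)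
    fun i ↦ (hYsub i).neg
  calc P.real {ω | ε ≤ |∑ i, Y i ω|}
      ≤ P.real ({ω | ε ≤ ∑ i, Y i ω} ∪ {ω | ε ≤ ∑ i, (-Y i) ω}) := by
        refine measureReal_mono (fun ω hω ↦ ?_)
        simpa [le_abs, sum_neg_distrib] using hω
    _ ≤ _ := (measureReal_union_le _ _).trans (by linarith)

end Hoeffding

section Independence

variable {Ω : Type*} {mΩ : MeasurableSpace Ω} {P : Measure Ω}

theorem ProbabilityTheory.iIndep.iSup_fiber {ι J : Type*} {m : ι → MeasurableSpace Ω}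
    (h_le : ∀ i, m i ≤ mΩ) (h : iIndep m P) (g : ι → J) :
    iIndep (fun j ↦ ⨆ i ∈ g ⁻¹' {j}, m i) P := by
  classical
  have := h.isProbabilityMeasure
  rw [iIndep_iff]
  intro S
  induction S using Finset.induction_on with
  | empty => simp
  | insert a S ha ih =>
    intro B hB
    have hindep : Indep (⨆ i ∈ g ⁻¹' {a}, m i) (⨆ i ∈ g ⁻¹' S, m i) P :=
      indep_iSup_of_disjoint h_le h ((Set.disjoint_singleton_left.2 ha).preimage g)
    have hS : MeasurableSet[⨆ i ∈ g ⁻¹' S, m i] (⋂ j ∈ S, B j) := by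
      refine .biInter S.countable_toSet fun j hj ↦ ?_
      have hle : (⨆ i ∈ g ⁻¹' {j}, m i) ≤ ⨆ i ∈ g ⁻¹' S, m i := biSup_mono fun i hi ↦ by
        rwa [Set.mem_preimage, Set.mem_singleton_iff.1 hi]
      exact hle _ (hB j (mem_insert_of_mem hj))
    rw [set_biInter_insert, prod_insert ha,
      (Indep_iff _ _ _).1 hindep _ _ (hB a (mem_insert_self a S)) hS,
      ih fun j hj ↦ hB j (mem_insert_of_mem hj)]

open Classical in
lemma measureReal_le_card_filter_mem_le {J : Type*} [Fintype J] {m : J → MeasurableSpace Ω}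
    (h : iIndep m P) {B : J → Set Ω} (hB : ∀ j, MeasurableSet[m j] (B j)) {p : ℝ}
    (hp : ∀ j, P.real (B j) ≤ p) (N : ℕ) :
    P.real {ω | N ≤ #{j | ω ∈ B j}} ≤ (Fintype.card J).choose N * p ^ N := by
  have := h.isProbabilityMeasure
  calc P.real {ω | N ≤ #{j | ω ∈ B j}}
      ≤ P.real (⋃ S ∈ powersetCard N univ, ⋂ j ∈ S, B j) := by
        refine measureReal_mono (fun ω hω ↦ ?_) (measure_ne_top _ _)
        obtain ⟨S, hS, hcard⟩ := exists_subset_card_eq hω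
        simp only [Set.mem_iUnion, Set.mem_iInter, mem_powersetCard]
        exact ⟨S, ⟨subset_univ S, hcard⟩, fun j hj ↦ (mem_filter.1 (hS hj)).2⟩
    _ ≤ ∑ S ∈ powersetCard N univ, P.real (⋂ j ∈ S, B j) := measureReal_biUnion_finset_le _ _
    _ ≤ ∑ S ∈ powersetCard N (univ : Finset J), p ^ N := by
        refine sum_le_sum fun S hS ↦ ?_
        rw [measureReal_def, h.meas_biInter fun j _ ↦ hB j, ENNReal.toReal_prod,
          ← (mem_powersetCard.1 hS).2]
        exact (prod_le_prod (fun _ _ ↦ ENNReal.toReal_nonneg) fun j _ ↦ hp j).trans_eq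
          (prod_const p)
    _ = (Fintype.card J).choose N * p ^ N := by
        rw [sum_const, card_powersetCard, card_univ, nsmul_eq_mul]

end Independence

section LipConst

variable {K D : ℕ} (x : Fin K → EuclideanSpace ℝ (Fin D))

lemma div_dist_le_lipConst (a : Fin K → ℝ) {i j : Fin K} (hij : i ≠ j) :
    |a i - a j| / dist (x i) (x j) ≤ lipConst x a := by
  refine le_csSup ((Set.finite_range fun q : Fin K × Fin K ↦
    |a q.1 - a q.2| / dist (x q.1) (x q.2)).subset ?_).bddAbove ⟨i, j, hij, rfl⟩
  rintro _ ⟨i, j, -, rfl⟩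
  exact ⟨(i, j), rfl⟩

lemma lipConst_le (hK : 2 ≤ K) (a : Fin K → ℝ) {c : ℝ}
    (h : ∀ i j, i ≠ j → |a i - a j| / dist (x i) (x j) ≤ c) : lipConst x a ≤ c := by
  refine csSup_le ⟨_, ⟨0, by omega⟩, ⟨1, by omega⟩, ?_, rfl⟩ ?_
  · simp [Fin.ext_iff]
  · rintro _ ⟨i, j, hij, rfl⟩
    exact h i j hij

lemma lipConst_le_of_abs_sub_le (hK : 2 ≤ K) (hx : Function.Injective x) {a : Fin K → ℝ}
    {L : ℝ} (ha : ∀ i j, |a i - a j| ≤ L * dist (x i) (x j)) : lipConst x a ≤ L :=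
  lipConst_le x hK a fun i j hij ↦ (div_le_iff₀ (dist_pos.2 (hx.ne hij))).2 (ha i j)

lemma Δemb_le_dist {i j : Fin K} (hij : i ≠ j) : Δemb x ≤ dist (x i) (x j) := by
  refine csInf_le ⟨0, ?_⟩ ⟨i, j, hij, rfl⟩
  rintro _ ⟨i, j, -, rfl⟩
  exact dist_nonneg

lemma Δemb_pos (hK : 2 ≤ K) (hx : Function.Injective x) : 0 < Δemb x := by
  set S := {r : ℝ | ∃ i j : Fin K, i ≠ j ∧ r = dist (x i) (x j)}
  have hne : S.Nonempty := ⟨_, ⟨0, by omega⟩, ⟨1, by omega⟩, by simp [Fin.ext_iff], rfl⟩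
  have hfin : S.Finite :=
    (Set.finite_range fun q : Fin K × Fin K ↦ dist (x q.1) (x q.2)).subset
      (by rintro _ ⟨i, j, -, rfl⟩; exact ⟨(i, j), rfl⟩)
  obtain ⟨i, j, hij, hmin⟩ := hne.csInf_mem hfin
  rw [Δemb, hmin]
  exact dist_pos.2 (hx.ne hij)

lemma lipConst_le_lipConst_add (hK : 2 ≤ K) (hx : Function.Injective x) {a b : Fin K → ℝ}
    {δ : ℝ} (hab : ∀ i, |a i - b i| ≤ δ) : lipConst x a ≤ lipConst x b + 2 * δ / Δemb x := by
  refine lipConst_le x hK a fun i j hij ↦ ?_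
  have hd : 0 < dist (x i) (x j) := dist_pos.2 (hx.ne hij)
  have hδ : 0 ≤ δ := (abs_nonneg _).trans (hab i)
  have hsub : |a i - a j| ≤ |b i - b j| + 2 * δ := by
    have hi := abs_le.1 (hab i)
    have hj := abs_le.1 (hab j)
    have := le_abs_self (b i - b j)
    have := neg_abs_le (b i - b j)
    exact abs_le.2 ⟨by linarith, by linarith⟩
  calc |a i - a j| / dist (x i) (x j)
      ≤ |b i - b j| / dist (x i) (x j) + 2 * δ / dist (x i) (x j) := by
        rw [← add_div]; gcongr
    _ ≤ lipConst x b + 2 * δ / Δemb x := by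
        gcongr
        · exact div_dist_le_lipConst x b hij
        · exact Δemb_pos x hK hx
        · exact Δemb_le_dist x hij

lemma abs_lipConst_sub_le (hK : 2 ≤ K) (hx : Function.Injective x) {a b : Fin K → ℝ}
    {δ : ℝ} (hab : ∀ i, |a i - b i| ≤ δ) :
    |lipConst x a - lipConst x b| ≤ 2 * δ / Δemb x := by
  have hba : ∀ i, |b i - a i| ≤ δ := fun i ↦ abs_sub_comm (a i) (b i) ▸ hab i
  have := lipConst_le_lipConst_add x hK hx hab
  have := lipConst_le_lipConst_add x hK hx hba
  exact abs_sub_le_iff.2 ⟨by linarith, by linarith⟩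

end LipConst

section KthLargest

variable {M : ℕ}

lemma le_kthLargest (f : Fin M → ℝ) {k : ℕ} (hk : 1 ≤ k) {t : ℝ}
    (h : k ≤ #{m | t ≤ f m}) : t ≤ kthLargest f k := by
  obtain ⟨b, hb⟩ := (Set.finite_range f).bddAbove
  refine le_csSup ⟨b, fun s hs ↦ ?_⟩ h
  obtain ⟨m, hm⟩ := card_pos.1 (hk.trans_lt' (by omega) |>.trans_le hs)
  exact (mem_filter.1 hm).2.trans (hb ⟨m, rfl⟩)

lemma le_card_filter_lt_of_lt_kthLargest (f : Fin M → ℝ) {k : ℕ} (hk : k ≤ M) {t : ℝ}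
    (h : t < kthLargest f k) : k ≤ #{m | t < f m} := by
  obtain ⟨b, hb⟩ := (Set.finite_range f).bddBelow
  have hne : {s : ℝ | k ≤ #{m | s ≤ f m}}.Nonempty := by
    refine ⟨b, ?_⟩
    simpa [filter_true_of_mem fun m _ ↦ hb ⟨m, rfl⟩] using hk
  obtain ⟨s, hs, hts⟩ := exists_lt_of_lt_csSup hne h
  refine hs.trans (card_le_card fun m hm ↦ ?_)
  rw [mem_filter] at hm ⊢
  exact ⟨hm.1, hts.trans_le hm.2⟩

variable {f g : Fin M → ℝ} {Bad : Finset (Fin M)} {ε : ℝ} {k : ℕ} {c : ℝ}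

lemma card_filter_le_lt_add_card_of_kthLargest_lt (hclose : ∀ m ∉ Bad, |f m - g m| ≤ ε)
    (hk : 1 ≤ k) (h : kthLargest f k < c - ε) : #{m | c ≤ g m} < k + #Bad := by
  have hfew : #{m | c - ε ≤ f m} < k := by
    by_contra! hmany
    exact (le_kthLargest f hk hmany).not_gt h
  calc #{m | c ≤ g m} ≤ #(({m | c - ε ≤ f m} : Finset (Fin M)) ∪ Bad) := by
        refine card_le_card fun m hm ↦ ?_
        by_cases hbad : m ∈ Bad
        · exact mem_union_right _ hbad
        · have := (abs_le.1 (hclose m hbad)).1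
          have := (mem_filter.1 hm).2
          exact mem_union_left _ (mem_filter.2 ⟨mem_univ m, by linarith⟩)
    _ ≤ #{m | c - ε ≤ f m} + #Bad := card_union_le _ _
    _ < k + #Bad := by omega

lemma le_card_of_add_lt_kthLargest (hclose : ∀ m ∉ Bad, |f m - g m| ≤ ε) (hk : k ≤ M)
    (hg : ∀ m, g m ≤ c) (h : c + ε < kthLargest f k) : k ≤ #Bad := by
  refine (le_card_filter_lt_of_lt_kthLargest f hk h).trans (card_le_card fun m hm ↦ ?_)
  by_contra hbad
  have := (abs_le.1 (hclose m hbad)).2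
  have := (mem_filter.1 hm).2
  linarith [hg m]

end KthLargest

lemma ceil_mul_min_le_card_of_kthLargest_far {M : ℕ} (hM : 1 ≤ M) {f g : Fin M → ℝ}
    {Bad : Finset (Fin M)} {L α β εα εβ : ℝ} (hα1 : α ≤ 1) (hβ0 : 0 < β) (hβα : β < α)
    (hclose : ∀ m ∉ Bad, |f m - g m| ≤ εβ - εα) (hg : ∀ m, g m ≤ L)
    (hlearn : α * M ≤ #{m | L - εα ≤ g m})
    (hfar : L > kthLargest f ⌈β * (M : ℝ)⌉₊ + εβ ∨ kthLargest f ⌈β * (M : ℝ)⌉₊ > L + (εβ - εα)) :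
    ⌈min β (α - β) * M⌉₊ ≤ #Bad := by
  have hMpos : (0 : ℝ) < M := by exact_mod_cast hM
  rcases hfar with h | h
  · have hcard : #{m | L - εα ≤ g m} < ⌈β * (M : ℝ)⌉₊ + #Bad :=
      card_filter_le_lt_add_card_of_kthLargest_lt hclose (Nat.ceil_pos.2 (by positivity))
        (by linarith)
    have hcard' : (#{m | L - εα ≤ g m} : ℝ) + 1 ≤ ⌈β * (M : ℝ)⌉₊ + #Bad := by
      exact_mod_cast hcard
    have hceil : (⌈β * (M : ℝ)⌉₊ : ℝ) < β * M + 1 := Nat.ceil_lt_add_one (by positivity)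
    refine Nat.ceil_le.2 ((mul_le_mul_of_nonneg_right (min_le_right _ _) hMpos.le).trans ?_)
    linarith
  · exact (Nat.ceil_mono (mul_le_mul_of_nonneg_right (min_le_left _ _) hMpos.le)).trans
      (le_card_of_add_lt_kthLargest hclose (Nat.ceil_le.2 (by nlinarith)) hg h)

section Rewards

variable {M K : ℕ} {n : Fin M → Fin K → ℕ} {Ω : Type*}
  {r : (Σ m : Fin M, Σ i : Fin K, Fin (n m i)) → Ω → ℝ}

lemma measurable_empMean_episode (m : Fin M) (i : Fin K) :
    Measurable[⨆ idx ∈ Sigma.fst ⁻¹' {m}, MeasurableSpace.comap (r idx) inferInstance]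
      (empMean r m i) := by
  refine (measurable_sum _ fun s _ ↦ (comap_measurable (r ⟨m, i, s⟩)).mono ?_ le_rfl).div_const _
  exact le_iSup₂ (f := fun idx (_ : idx ∈ Sigma.fst ⁻¹' {m}) ↦
    MeasurableSpace.comap (r idx) inferInstance) ⟨m, i, s⟩ rfl

lemma measurableSet_iUnion_le_abs_empMean_sub (m : Fin M) (c : Fin K → ℝ) (δ : ℝ) :
    MeasurableSet[⨆ idx ∈ Sigma.fst ⁻¹' {m}, MeasurableSpace.comap (r idx) inferInstance]
      (⋃ i, {ω | δ ≤ |empMean r m i ω - c i|}) :=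
  MeasurableSet.iUnion fun i ↦
    ((measurable_id.sub_const (c i)).abs.comp (measurable_empMean_episode m i)) measurableSet_Ici

variable [MeasurableSpace Ω] {P : Measure Ω} [IsProbabilityMeasure P] {μv : Fin M → Fin K → ℝ}

lemma measureReal_le_abs_empMean_sub_le (hmeas : ∀ idx, Measurable (r idx))
    (h01 : ∀ idx ω, r idx ω = 0 ∨ r idx ω = 1)
    (hmean : ∀ idx, P {ω | r idx ω = 1} = ENNReal.ofReal (μv idx.1 idx.2.1))
    (hindep : iIndepFun r P) {m : Fin M} {i : Fin K} (hμ : 0 ≤ μv m i) {δ : ℝ} (hδ : 0 ≤ δ) :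
    P.real {ω | δ ≤ |empMean r m i ω - μv m i|} ≤ 2 * exp (-2 * n m i * δ ^ 2) := by
  set X : Fin (n m i) → Ω → ℝ := fun s ↦ r ⟨m, i, s⟩
  have hX : iIndepFun X P := hindep.precomp fun s t hst ↦ by simpa using hst
  have hint : ∀ s, P[X s] = μv m i :=
    fun s ↦ integral_eq_of_eq_zero_or_one (hmeas _) (h01 _) hμ (hmean _)
  have hoeffding := measureReal_le_abs_sum_sub_integral_le hX (fun _ ↦ hmeas _)
    (fun s ω ↦ by rcases h01 ⟨m, i, s⟩ ω with h | h <;> simp [X, h])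
    (mul_nonneg (Nat.cast_nonneg (n m i)) hδ)
  simp only [hint, Fintype.card_fin, sum_sub_distrib, sum_const, card_univ,
    nsmul_eq_mul] at hoeffding
  refine (measureReal_mono (fun ω hω ↦ ?_) (measure_ne_top _ _)).trans (hoeffding.trans_eq ?_)
  · rcases (Nat.cast_nonneg (n m i) : (0 : ℝ) ≤ n m i).eq_or_lt with hn | hn
    · simp [← hn]
    · have : |∑ s, X s ω - n m i * μv m i| = n m i * |empMean r m i ω - μv m i| := by
        rw [← abs_of_pos hn, ← abs_mul, abs_of_pos hn, empMean, mul_sub, mul_div_cancel₀ _ hn.ne']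
      rw [Set.mem_ofPred_eq, this]
      exact mul_le_mul_of_nonneg_left hω hn.le
  · rcases eq_or_ne (n m i : ℝ) 0 with hn | hn
    · simp [hn]
    · field_simp

lemma measureReal_iUnion_le_abs_empMean_sub_le (hmeas : ∀ idx, Measurable (r idx))
    (h01 : ∀ idx ω, r idx ω = 0 ∨ r idx ω = 1)
    (hmean : ∀ idx, P {ω | r idx ω = 1} = ENNReal.ofReal (μv idx.1 idx.2.1))
    (hindep : iIndepFun r P) {m : Fin M} (hμ : ∀ i, 0 ≤ μv m i) {τ δ : ℝ} (hδ : 0 ≤ δ)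
    (hn : ∀ i, τ ≤ n m i) :
    P.real (⋃ i, {ω | δ ≤ |empMean r m i ω - μv m i|}) ≤ 2 * K * exp (-2 * τ * δ ^ 2) := by
  calc P.real (⋃ i, {ω | δ ≤ |empMean r m i ω - μv m i|})
      ≤ ∑ i, P.real {ω | δ ≤ |empMean r m i ω - μv m i|} := measureReal_iUnion_fintype_le _
    _ ≤ ∑ _i : Fin K, 2 * exp (-2 * τ * δ ^ 2) := by
        refine sum_le_sum fun i _ ↦
          (measureReal_le_abs_empMean_sub_le hmeas h01 hmean hindep (hμ i) hδ).trans ?_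
        have := mul_le_mul_of_nonneg_right (hn i) (sq_nonneg δ)
        gcongr 2 * exp ?_
        linarith
    _ = 2 * K * exp (-2 * τ * δ ^ 2) := by
        rw [sum_const, card_univ, Fintype.card_fin, nsmul_eq_mul]
        ring

open Classical in
lemma measureReal_le_card_deviating_episodes_le (hmeas : ∀ idx, Measurable (r idx))
    (h01 : ∀ idx ω, r idx ω = 0 ∨ r idx ω = 1)
    (hmean : ∀ idx, P {ω | r idx ω = 1} = ENNReal.ofReal (μv idx.1 idx.2.1))
    (hindep : iIndepFun r P) (hμ : ∀ m i, 0 ≤ μv m i) {τ δ : ℝ} (hδ : 0 ≤ δ)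
    (hn : ∀ m i, τ ≤ n m i) (N : ℕ) :
    P.real {ω | N ≤ #{m | ∃ i, δ ≤ |empMean r m i ω - μv m i|}}
      ≤ M.choose N * (2 * K * exp (-2 * τ * δ ^ 2)) ^ N := by
  have hr : iIndep (fun idx ↦ MeasurableSpace.comap (r idx) inferInstance) P :=
    (iIndepFun_iff_iIndep _ _ _).1 hindep
  have hepisodes := hr.iSup_fiber (fun idx ↦ (hmeas idx).comap_le) Sigma.fst
  have := measureReal_le_card_filter_mem_le hepisodes
    (B := fun m ↦ ⋃ i, {ω | δ ≤ |empMean r m i ω - μv m i|})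
    (fun m ↦ measurableSet_iUnion_le_abs_empMean_sub m (μv m) δ)
    (fun m ↦ measureReal_iUnion_le_abs_empMean_sub_le hmeas h01 hmean hindep (hμ m) hδ (hn m)) N
  simpa only [Set.mem_iUnion, Set.mem_ofPred_eq, Fintype.card_fin] using this

end Rewards

lemma choose_mul_pow_le_exp {M N : ℕ} {γ a c : ℝ} (hγ : 0 < γ) (ha : 0 ≤ a) (hc : 0 < c)
    (hlog : Real.log c + 1 / γ ≤ a) (hN : γ * M ≤ N) :
    M.choose N * (c * exp (-2 * a)) ^ N ≤ exp (-(a * (γ * M))) := by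
  have hchoose : (M.choose N : ℝ) ≤ exp M :=
    calc (M.choose N : ℝ) ≤ 2 ^ M := by exact_mod_cast Nat.choose_le_two_pow M N
      _ ≤ exp 1 ^ M := by gcongr; linarith [add_one_le_exp (1 : ℝ)]
      _ = exp M := by rw [← exp_nat_mul, mul_one]
  have hp : c * exp (-2 * a) ≤ exp (-(1 / γ) - a) := by
    rw [← exp_log hc, ← exp_add]
    exact exp_le_exp.2 (by linarith)
  have hMN : (M : ℝ) ≤ N / γ := (le_div_iff₀ hγ).2 (by linarith)
  have haN : a * (γ * M) ≤ a * N := mul_le_mul_of_nonneg_left hN ha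
  calc M.choose N * (c * exp (-2 * a)) ^ N ≤ exp M * exp (-(1 / γ) - a) ^ N := by gcongr
    _ = exp (M - N / γ - a * N) := by rw [← exp_nat_mul, ← exp_add]; ring_nf
    _ ≤ exp (-(a * (γ * M))) := exp_le_exp.2 (by linarith)

theorem stmt6_general {K D M : ℕ} (hK : 2 ≤ K) (hM : 1 ≤ M)
    (x : Fin K → EuclideanSpace ℝ (Fin D))
    (hx : Function.Injective x)
    (L : ℝ)
    (μv : Fin M → Fin K → ℝ) (hμ : ∀ m, μv m ∈ Phi x L)
    -- learnability assumption with parameters (α, ε_α)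
    (α εα : ℝ) (hα1 : α ≤ 1)
    (hlearn : α * M ≤
      ((Finset.univ.filter (fun m => L - εα ≤ lipConst x (μv m))).card : ℝ))
    (β εβ : ℝ) (hβ0 : 0 < β) (hβα : β < α) (hεβ : εα < εβ)
    -- minimal exploration: every arm pulled at least τ times in every episode
    (τ : ℝ) (hτ0 : 0 < τ)
    (n : Fin M → Fin K → ℕ) (hn : ∀ m i, τ ≤ (n m i : ℝ))
    (hτ : 4 / ((Δemb x) ^ 2 * (εβ - εα) ^ 2) *
            (Real.log (2 * K) + 1 / min β (α - β)) ≤ τ)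
    -- the rewards: mutually independent Bernoulli(μ_m(i))
    {Ω : Type*} [MeasurableSpace Ω] (P : Measure Ω) [IsProbabilityMeasure P]
    (r : (Σ m : Fin M, Σ i : Fin K, Fin (n m i)) → Ω → ℝ)
    (hmeas : ∀ idx, Measurable (r idx))
    (h01 : ∀ idx ω, r idx ω = 0 ∨ r idx ω = 1)
    (hmean : ∀ idx, P {ω | r idx ω = 1} = ENNReal.ofReal (μv idx.1 idx.2.1))
    (hindep : iIndepFun r P) :
    (P {ω | L >
        kthLargest (fun m => lipConst x (fun i => empMean r m i ω)) ⌈β * (M : ℝ)⌉₊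
          + εβ}).toReal
    + (P {ω |
        kthLargest (fun m => lipConst x (fun i => empMean r m i ω)) ⌈β * (M : ℝ)⌉₊
          > L + (εβ - εα)}).toReal
    ≤ 8 * M *
        Real.exp (-((Δemb x) ^ 2 * (εβ - εα) ^ 2 / 4) * min β (α - β) * (τ * M)) := by
  classical
  set δ := Δemb x * (εβ - εα) / 2 with hδ
  set γ := min β (α - β)
  have hΔ := Δemb_pos x hK hx
  have hδpos : 0 < δ := div_pos (mul_pos hΔ (sub_pos.2 hεβ)) two_pos
  have hclose : ∀ ω, ∀ m ∉ ({m | ∃ i, δ ≤ |empMean r m i ω - μv m i|} : Finset (Fin M)),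
      |lipConst x (fun i ↦ empMean r m i ω) - lipConst x (μv m)| ≤ εβ - εα := by
    intro ω m hm
    simp only [mem_filter, mem_univ, true_and, not_exists, not_le] at hm
    exact (abs_lipConst_sub_le x hK hx fun i ↦ (hm i).le).trans_eq (by rw [hδ]; field_simp)
  have hL : ∀ m, lipConst x (μv m) ≤ L := fun m ↦ lipConst_le_of_abs_sub_le x hK hx (hμ m).2
  have hlog : Real.log (2 * K) + 1 / γ ≤ τ * δ ^ 2 := by
    rw [div_mul_eq_mul_div, div_le_iff₀ (by positivity)] at hτ
    have : τ * δ ^ 2 = τ * (Δemb x ^ 2 * (εβ - εα) ^ 2) / 4 := by rw [hδ]; ring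
    linarith
  have hcount := measureReal_le_card_deviating_episodes_le hmeas h01 hmean hindep
    (fun m i ↦ ((hμ m).1 i).1) hδpos.le hn ⌈γ * M⌉₊
  rw [show -2 * τ * δ ^ 2 = -2 * (τ * δ ^ 2) by ring] at hcount
  have hnum := choose_mul_pow_le_exp (M := M) (γ := γ) (lt_min hβ0 (sub_pos.2 hβα)) (by positivity)
    (by positivity) hlog (Nat.le_ceil _)
  calc _ ≤ 2 * P.real {ω | ⌈γ * M⌉₊ ≤ #{m | ∃ i, δ ≤ |empMean r m i ω - μv m i|}} := by
        rw [two_mul]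
        exact add_le_add
          (measureReal_mono fun ω h ↦ ceil_mul_min_le_card_of_kthLargest_far hM hα1 hβ0 hβα
            (hclose ω) hL hlearn (.inl h))
          (measureReal_mono fun ω h ↦ ceil_mul_min_le_card_of_kthLargest_far hM hα1 hβ0 hβα
            (hclose ω) hL hlearn (.inr h))
    _ ≤ 2 * exp (-(τ * δ ^ 2 * (γ * M))) := by linarith
    _ ≤ _ := by
        rw [show -(τ * δ ^ 2 * (γ * M)) = -(Δemb x ^ 2 * (εβ - εα) ^ 2 / 4) * γ * (τ * M) by ring]
        gcongr
        linarith [(Nat.one_le_cast.2 hM : (1 : ℝ) ≤ M)]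

theorem stmt6 {K D M : ℕ} (hK : 2 ≤ K) (hM : 1 ≤ M)
    (x : Fin K → EuclideanSpace ℝ (Fin D))
    (hx : Function.Injective x)
    (hcube : ∀ i t, x i t ∈ Set.Icc (0:ℝ) 1)
    (L : ℝ) (hL : 0 < L)
    (μv : Fin M → Fin K → ℝ) (hμ : ∀ m, μv m ∈ Phi x L)
    -- learnability assumption with parameters (α, ε_α)
    (α εα : ℝ) (hα0 : 0 < α) (hα1 : α ≤ 1) (hεα : 0 < εα)
    (hlearn : α * M ≤
      ((Finset.univ.filter (fun m => L - εα ≤ lipConst x (μv m))).card : ℝ))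
    (β εβ : ℝ) (hβ0 : 0 < β) (hβα : β < α) (hεβ : εα < εβ)
    -- minimal exploration: every arm pulled at least τ times in every episode
    (τ : ℝ) (hτ0 : 0 < τ)
    (n : Fin M → Fin K → ℕ) (hn : ∀ m i, τ ≤ (n m i : ℝ))
    (hτ : 4 / ((Δemb x) ^ 2 * (εβ - εα) ^ 2) *
            (Real.log (2 * K) + 1 / min β (α - β)) ≤ τ)
    -- the rewards: mutually independent Bernoulli(μ_m(i))
    {Ω : Type*} [MeasurableSpace Ω] (P : Measure Ω) [IsProbabilityMeasure P]
    (r : (Σ m : Fin M, Σ i : Fin K, Fin (n m i)) → Ω → ℝ)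
    (hmeas : ∀ idx, Measurable (r idx))
    (h01 : ∀ idx ω, r idx ω = 0 ∨ r idx ω = 1)
    (hmean : ∀ idx, P {ω | r idx ω = 1} = ENNReal.ofReal (μv idx.1 idx.2.1))
    (hindep : iIndepFun r P) :
    (P {ω | L >
        kthLargest (fun m => lipConst x (fun i => empMean r m i ω)) ⌈β * (M : ℝ)⌉₊
          + εβ}).toReal
    + (P {ω |
        kthLargest (fun m => lipConst x (fun i => empMean r m i ω)) ⌈β * (M : ℝ)⌉₊
          > L + (εβ - εα)}).toReal
    ≤ 8 * M *
        Real.exp (-((Δemb x) ^ 2 * (εβ - εα) ^ 2 / 4) * min β (α - β) * (τ * M)) :=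
  stmt6_general hK hM x hx L μv hμ α εα hα1 hlearn β εβ hβ0 hβα hεβ τ hτ0 n hn hτ P r hmeas h01
    hmean hindep
end
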